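/- arXiv:0910.5327 — 5 statements merged into one kernel-verified Lean document; each statement's English description precedes it below -/
import Mathlib

section
/- For every matrix w ∈ 𝕎 and every pair (ν₁, ν₂) ∈ G with blocks A ∈ GL₂(ℂ), α ∈ ℂ* (in ν₁) and β ∈ ℂ*, B ∈ GL₂(ℂ) (in ν₂) as in the context, one has the identity Δ(ν₂ · w · ν₁⁻¹) = (β/α) · B · Δ(w) · A⁻¹ of 2×2 matrices of quadratic forms. In particular Δ intertwines the G-action on 𝕎 with the action of GL₂(ℂ) × GL₂(ℂ) on 2×2 matrices of quadratic forms given by (A, B)·M = B·M·A⁻¹. -/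
open MvPolynomial Matrix

noncomputable section

/-- The polynomial ring `R = ℂ[x₀,x₁,x₂]`. -/
abbrev Rp : Type := MvPolynomial (Fin 3) ℂ

/-- `p` is a linear form. -/
def IsLin (p : Rp) : Prop := p.IsHomogeneous 1

/-- `p` is a quadratic form. -/
def IsQuad (p : Rp) : Prop := p.IsHomogeneous 2

/-- Membership in `𝕎` : entries `w₁₁, w₁₂, w₂₃, w₃₃` linear, `w₁₃` a constant,
`w₂₁, w₂₂, w₃₁, w₃₂` quadratic. -/
def Wmat (w : Matrix (Fin 3) (Fin 3) Rp) : Prop :=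
  IsLin (w 0 0) ∧ IsLin (w 0 1) ∧ IsLin (w 1 2) ∧ IsLin (w 2 2) ∧
  (∃ c : ℂ, w 0 2 = C c) ∧
  IsQuad (w 1 0) ∧ IsQuad (w 1 1) ∧ IsQuad (w 2 0) ∧ IsQuad (w 2 1)

/-- `Δ(w) = w₁₃·[[w₂₁, w₂₂],[w₃₁, w₃₂]] − [[w₂₃],[w₃₃]]·[w₁₁, w₁₂]`. -/
def Δ (w : Matrix (Fin 3) (Fin 3) Rp) : Matrix (Fin 2) (Fin 2) Rp :=
  !![w 0 2 * w 1 0 - w 1 2 * w 0 0, w 0 2 * w 1 1 - w 1 2 * w 0 1;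
     w 0 2 * w 2 0 - w 2 2 * w 0 0, w 0 2 * w 2 1 - w 2 2 * w 0 1]

/-- The matrix `ν₁ = [[A, 0],[φ, α]]`. -/
def nu1 (A : Matrix (Fin 2) (Fin 2) ℂ) (α : ℂ) (φ : Fin 2 → Rp) :
    Matrix (Fin 3) (Fin 3) Rp :=
  !![C (A 0 0), C (A 0 1), 0;
     C (A 1 0), C (A 1 1), 0;
     φ 0, φ 1, C α]

/-- The matrix `ν₂ = [[β, 0],[ψ, B]]`. -/
def nu2 (B : Matrix (Fin 2) (Fin 2) ℂ) (β : ℂ) (ψ : Fin 2 → Rp) :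
    Matrix (Fin 3) (Fin 3) Rp :=
  !![C β, 0, 0;
     ψ 0, C (B 0 0), C (B 0 1);
     ψ 1, C (B 1 0), C (B 1 1)]

/-!
Write `w` in blocks `[[r, c], [M, v]]` (rows `1 + 2`, columns `2 + 1`), so that
`Δ w = c • M - v * r`. Right multiplication by `ν₁` turns the blocks into
`(r A + c φ, c α, M A + v φ, v α)`, and the `φ`-terms cancel in
`c α (M A + v φ) - v α (r A + c φ) = α (c M - v r) A`; left multiplication by `ν₂` is symmetric.
For `ν₁⁻¹` it suffices to apply this to `w ν₁⁻¹`, since `ν₁` is invertible (its determinant is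
`det A · α`), so `ν₁⁻¹` never has to be computed.
-/

lemma Δ_nu2_mul (B : Matrix (Fin 2) (Fin 2) ℂ) (β : ℂ) (ψ : Fin 2 → Rp)
    (w : Matrix (Fin 3) (Fin 3) Rp) :
    Δ (nu2 B β ψ * w) = (C β : Rp) • (B.map (fun x => C x) * Δ w) := by
  ext i j : 1
  fin_cases i <;> fin_cases j <;>
    simp [Δ, nu2, Matrix.mul_apply, Fin.sum_univ_succ, smul_eq_mul] <;> ring

lemma Δ_mul_nu1 (w : Matrix (Fin 3) (Fin 3) Rp)
    (A : Matrix (Fin 2) (Fin 2) ℂ) (α : ℂ) (φ : Fin 2 → Rp) :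
    Δ (w * nu1 A α φ) = (C α : Rp) • (Δ w * A.map (fun x => C x)) := by
  ext i j : 1
  fin_cases i <;> fin_cases j <;>
    simp [Δ, nu1, Matrix.mul_apply, Matrix.vecMul, dotProduct, Fin.sum_univ_succ,
      smul_eq_mul] <;> ring

lemma det_nu1 (A : Matrix (Fin 2) (Fin 2) ℂ) (α : ℂ) (φ : Fin 2 → Rp) :
    (nu1 A α φ).det = C (A.det * α) := by
  simp [nu1, Matrix.det_fin_three, Matrix.det_fin_two]
  ring

lemma Δ_mul_nu1_inv (w : Matrix (Fin 3) (Fin 3) Rp)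
    (A : Matrix.GeneralLinearGroup (Fin 2) ℂ) (α : ℂˣ) (φ : Fin 2 → Rp) :
    Δ (w * (nu1 A α φ)⁻¹) =
      (C (α : ℂ)⁻¹ : Rp) • (Δ w * ((A⁻¹ : Matrix.GeneralLinearGroup (Fin 2) ℂ) :
        Matrix (Fin 2) (Fin 2) ℂ).map (fun x => C x)) := by
  have hunit : IsUnit (nu1 A α φ).det := by
    rw [det_nu1]
    exact ((Matrix.isUnits_det_units A).mul α.isUnit).map C
  have hw : Δ w = (C (α : ℂ) : Rp) • (Δ (w * (nu1 A α φ)⁻¹) *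
      (A : Matrix (Fin 2) (Fin 2) ℂ).map (fun x => C x)) := by
    rw [← Δ_mul_nu1, Matrix.mul_assoc, Matrix.nonsing_inv_mul _ hunit, Matrix.mul_one]
  rw [hw, Matrix.smul_mul, Matrix.mul_assoc, ← Matrix.map_mul, A.mul_inv,
    Matrix.map_one _ (map_zero C) (map_one C), Matrix.mul_one, smul_smul, ← C_mul,
    inv_mul_cancel₀ α.ne_zero, C_1, one_smul]

theorem stmt0_general (w : Matrix (Fin 3) (Fin 3) Rp)
    (A B : Matrix.GeneralLinearGroup (Fin 2) ℂ) (α β : ℂˣ)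
    (φ ψ : Fin 2 → Rp) :
    Δ (nu2 (B : Matrix (Fin 2) (Fin 2) ℂ) (β : ℂ) ψ * w *
        (nu1 (A : Matrix (Fin 2) (Fin 2) ℂ) (α : ℂ) φ)⁻¹) =
      (C ((β : ℂ) / (α : ℂ)) : Rp) •
        (((B : Matrix (Fin 2) (Fin 2) ℂ)).map (fun x => C x) * Δ w *
          ((A⁻¹ : Matrix.GeneralLinearGroup (Fin 2) ℂ) :
            Matrix (Fin 2) (Fin 2) ℂ).map (fun x => C x)) := by
  rw [Matrix.mul_assoc, Δ_nu2_mul, Δ_mul_nu1_inv, Matrix.mul_smul, smul_smul, ← C_mul,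
    ← div_eq_mul_inv, Matrix.mul_assoc]

/-- `Δ(ν₂ · w · ν₁⁻¹) = (β/α) · B · Δ(w) · A⁻¹`, so `Δ` intertwines the
`G`-action on `𝕎` with the action `(A, B)·M = B·M·A⁻¹` of `GL₂(ℂ) × GL₂(ℂ)`. -/
theorem stmt0 (w : Matrix (Fin 3) (Fin 3) Rp) (hw : Wmat w)
    (A B : Matrix.GeneralLinearGroup (Fin 2) ℂ) (α β : ℂˣ)
    (φ ψ : Fin 2 → Rp) (hφ : ∀ i, IsLin (φ i)) (hψ : ∀ i, IsLin (ψ i)) :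
    Δ (nu2 (B : Matrix (Fin 2) (Fin 2) ℂ) (β : ℂ) ψ * w *
        (nu1 (A : Matrix (Fin 2) (Fin 2) ℂ) (α : ℂ) φ)⁻¹) =
      (C ((β : ℂ) / (α : ℂ)) : Rp) •
        (((B : Matrix (Fin 2) (Fin 2) ℂ)).map (fun x => C x) * Δ w *
          ((A⁻¹ : Matrix.GeneralLinearGroup (Fin 2) ℂ) :
            Matrix (Fin 2) (Fin 2) ℂ).map (fun x => C x)) :=
  stmt0_general w A B α β φ ψ
end
end

section
/- Let M be a 2×2 matrix with entries in R₂ whose rows are linearly independent over ℂ and whose columns are linearly independent over ℂ (i.e., M is semistable). Then M is not stable if and only if M is equivalent, modulo row and column operations, to a matrix having a zero entry; that is, if and only if there exist A, B ∈ GL₂(ℂ) such that some entry of B·M·A is the zero polynomial. -/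
open MvPolynomial Matrix

noncomputable section

/-- The `R`-submodule `K ⊗ R` of `ℂ² ⊗ R ≅ (Fin 2 → R)` attached to a subspace
`K ⊆ ℂ²`; a vector of quadratic forms lies in it iff it lies in `K ⊗ R₂`. -/
def KtensorR (K : Submodule ℂ (Fin 2 → ℂ)) : Submodule Rp (Fin 2 → Rp) :=
  Submodule.span Rp ((fun k : Fin 2 → ℂ => fun i => (C (k i) : Rp)) '' (K : Set (Fin 2 → ℂ)))

/-- `M` maps `H` into `K`: for every `h ∈ H` the pair of quadratic forms `M·h`
lies in `K ⊗ R₂`. -/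
def MapsInto (M : Matrix (Fin 2) (Fin 2) Rp) (H K : Submodule ℂ (Fin 2 → ℂ)) : Prop :=
  ∀ h ∈ H, M.mulVec (fun j => (C (h j) : Rp)) ∈ KtensorR K

/-- `M` is semistable : `dim K ≥ dim H` whenever `M` maps a nonzero `H` into `K`. -/
def Semistable (M : Matrix (Fin 2) (Fin 2) Rp) : Prop :=
  ∀ H K : Submodule ℂ (Fin 2 → ℂ), H ≠ ⊥ → MapsInto M H K →
    Module.finrank ℂ H ≤ Module.finrank ℂ K

/-- `M` is stable : semistable, and moreover `dim K > dim H` whenever `M` maps a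
nonzero `H` into `K` and `(H, K) ≠ (ℂ², ℂ²)`. -/
def Stable (M : Matrix (Fin 2) (Fin 2) Rp) : Prop :=
  Semistable M ∧
    ∀ H K : Submodule ℂ (Fin 2 → ℂ), H ≠ ⊥ → MapsInto M H K → ¬(H = ⊤ ∧ K = ⊤) →
      Module.finrank ℂ H < Module.finrank ℂ K

namespace Stmt4Aux

lemma kill (b : Fin 2 → ℂ) (K : Submodule ℂ (Fin 2 → ℂ))
    (hb : ∀ k ∈ K, b 0 * k 0 + b 1 * k 1 = 0) :
    ∀ v ∈ KtensorR K, C (b 0) * v 0 + C (b 1) * v 1 = 0 := by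
  have h : KtensorR K ≤ LinearMap.ker
      ((C (b 0) : Rp) • (LinearMap.proj 0 : (Fin 2 → Rp) →ₗ[Rp] Rp)
        + (C (b 1) : Rp) • (LinearMap.proj 1 : (Fin 2 → Rp) →ₗ[Rp] Rp)) := by
    rw [KtensorR, Submodule.span_le]
    rintro v ⟨k, hk, rfl⟩
    simp only [SetLike.mem_coe, LinearMap.mem_ker, LinearMap.add_apply, LinearMap.smul_apply,
      LinearMap.proj_apply, smul_eq_mul]
    rw [← C_mul, ← C_mul, ← C_add, hb k hk, C_0]
  intro v hv
  simpa using h hv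

lemma exists_orth (K : Submodule ℂ (Fin 2 → ℂ)) (hK : Module.finrank ℂ K ≤ 1) :
    ∃ b : Fin 2 → ℂ, b ≠ 0 ∧ ∀ k ∈ K, b 0 * k 0 + b 1 * k 1 = 0 := by
  obtain ⟨v, hv⟩ := finrank_le_one_iff.mp hK
  by_cases h0 : (v : Fin 2 → ℂ) = 0
  · refine ⟨![1, 0], by simp [funext_iff, Fin.forall_fin_two], ?_⟩
    intro k hk
    obtain ⟨c, hc⟩ := hv ⟨k, hk⟩
    have : c • (v : Fin 2 → ℂ) = k := congrArg Subtype.val hc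
    rw [← this, h0]
    simp
  · refine ⟨![(v : Fin 2 → ℂ) 1, -((v : Fin 2 → ℂ) 0)], ?_, ?_⟩
    · intro hb
      apply h0
      funext i
      have h1 := congrFun hb 0
      have h2 := congrFun hb 1
      simp at h1 h2
      fin_cases i <;> simp [h1, h2]
    · intro k hk
      obtain ⟨c, hc⟩ := hv ⟨k, hk⟩
      have : c • (v : Fin 2 → ℂ) = k := congrArg Subtype.val hc
      rw [← this]
      simp
      ring

lemma semistable_of (M : Matrix (Fin 2) (Fin 2) Rp)
    (hrows : LinearIndependent ℂ (fun i => M i))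
    (hcols : LinearIndependent ℂ (fun j i => M i j)) : Semistable M := by
  intro H K hH hmap
  by_contra hlt
  push_neg at hlt
  obtain ⟨a, haH, ha0⟩ := Submodule.ne_bot_iff H |>.mp hH
  have h1 : 1 ≤ Module.finrank ℂ H := by
    have hle : Submodule.span ℂ {a} ≤ H := by
      rw [Submodule.span_le]; simpa using haH
    calc 1 = Module.finrank ℂ (Submodule.span ℂ {a}) := (finrank_span_singleton ha0).symm
    _ ≤ Module.finrank ℂ H := Submodule.finrank_mono hle
  have h2 : Module.finrank ℂ H ≤ 2 := by
    have := Submodule.finrank_le H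
    rwa [Module.finrank_fin_fun] at this
  have hK1 : Module.finrank ℂ K ≤ 1 := by omega
  by_cases hH2 : Module.finrank ℂ H = 2
  · have hHtop : H = ⊤ := by
      apply Submodule.eq_top_of_finrank_eq
      rw [hH2, Module.finrank_fin_fun]
    obtain ⟨b, hb0, hborth⟩ := exists_orth K hK1
    have key : ∀ h : Fin 2 → ℂ,
        C (b 0) * (M.mulVec fun j => (C (h j) : Rp)) 0
          + C (b 1) * (M.mulVec fun j => (C (h j) : Rp)) 1 = 0 := by
      intro h
      exact kill b K hborth _ (hmap h (hHtop ▸ Submodule.mem_top))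
    have hcomb : ∀ j, C (b 0) * M 0 j + C (b 1) * M 1 j = 0 := by
      intro j
      fin_cases j
      · have := key ![1, 0]
        simpa [Matrix.mulVec, dotProduct, Fin.sum_univ_two] using this
      · have := key ![0, 1]
        simpa [Matrix.mulVec, dotProduct, Fin.sum_univ_two] using this
    have := Fintype.linearIndependent_iff.mp hrows b ?_
    · apply hb0; funext i; fin_cases i <;> simp [this]
    · funext j
      have := hcomb j
      simpa [Fin.sum_univ_two, MvPolynomial.smul_eq_C_mul] using this
  · have hK0 : Module.finrank ℂ K = 0 := by omega
    have hKbot : K = ⊥ := Submodule.finrank_eq_zero.mp hK0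
    have hmem := hmap a haH
    have hz0 := kill ![1, 0] K (by rw [hKbot]; intro k hk; simp at hk; simp [hk]) _ hmem
    have hz1 := kill ![0, 1] K (by rw [hKbot]; intro k hk; simp at hk; simp [hk]) _ hmem
    simp at hz0 hz1
    have := Fintype.linearIndependent_iff.mp hcols a ?_
    · apply ha0; funext j; fin_cases j <;> simp [this]
    · funext i
      fin_cases i
      · have := hz0
        simpa [Fin.sum_univ_two, MvPolynomial.smul_eq_C_mul] using
          (by linear_combination this : C (a 0) * M 0 0 + C (a 1) * M 0 1 = 0)
      · have := hz1
        simpa [Fin.sum_univ_two, MvPolynomial.smul_eq_C_mul] using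
          (by linear_combination this : C (a 0) * M 1 0 + C (a 1) * M 1 1 = 0)

def ext1 (a : Fin 2 → ℂ) : Matrix (Fin 2) (Fin 2) ℂ :=
  if a 0 = 0 then !![a 0, 1; a 1, 0] else !![a 0, 0; a 1, 1]

lemma ext1_det (a : Fin 2 → ℂ) (ha : a ≠ 0) : (ext1 a).det ≠ 0 := by
  unfold ext1
  split_ifs with h
  · have : a 1 ≠ 0 := by
      intro h1; apply ha; funext i; fin_cases i <;> simp [h, h1]
    simp [Matrix.det_fin_two, h, this]
  · simp [Matrix.det_fin_two, h]

lemma ext1_col (a : Fin 2 → ℂ) (i : Fin 2) : ext1 a i 0 = a i := by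
  unfold ext1
  split_ifs <;> fin_cases i <;> simp

lemma col_ne_zero (A : GL (Fin 2) ℂ) (j : Fin 2) :
    (fun m => (A : Matrix (Fin 2) (Fin 2) ℂ) m j) ≠ 0 := by
  intro h
  have h1 : ((A⁻¹ : GL (Fin 2) ℂ) : Matrix (Fin 2) (Fin 2) ℂ) * A = 1 := by
    rw [← Units.val_mul, inv_mul_cancel, Units.val_one]
  have h2 := congrFun (congrFun h1 j) j
  rw [Matrix.mul_apply] at h2
  have h3 : ∀ m, (A : Matrix (Fin 2) (Fin 2) ℂ) m j = 0 := fun m => congrFun h m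
  simp [h3] at h2

lemma row_ne_zero (B : GL (Fin 2) ℂ) (i : Fin 2) :
    (fun l => (B : Matrix (Fin 2) (Fin 2) ℂ) i l) ≠ 0 := by
  intro h
  have h1 : (B : Matrix (Fin 2) (Fin 2) ℂ) *
      ((B⁻¹ : GL (Fin 2) ℂ) : Matrix (Fin 2) (Fin 2) ℂ) = 1 := by
    rw [← Units.val_mul, mul_inv_cancel, Units.val_one]
  have h2 := congrFun (congrFun h1 i) i
  rw [Matrix.mul_apply] at h2
  have h3 : ∀ l, (B : Matrix (Fin 2) (Fin 2) ℂ) i l = 0 := fun l => congrFun h l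
  simp [h3] at h2

lemma factor (u v : Rp) (b0 b1 : ℂ) (h : C b0 * u + C b1 * v = 0)
    (hb : ¬(b0 = 0 ∧ b1 = 0)) :
    ∃ p : Rp, u = p * C b1 ∧ v = p * C (-b0) := by
  by_cases hb1 : b1 = 0
  · have hb0 : b0 ≠ 0 := fun h0 => hb ⟨h0, hb1⟩
    have hu : u = 0 := by
      have h' : (C b0 : Rp) * u = 0 := by
        rw [hb1, C_0, zero_mul, add_zero] at h; exact h
      rcases mul_eq_zero.mp h' with h'' | h''
      · exact absurd (by simpa using h'') hb0
      · exact h''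
    refine ⟨C (-b0)⁻¹ * v, ?_, ?_⟩
    · rw [hu, hb1, C_0, mul_zero]
    · have e1 : (C (-b0) : Rp) * C (-b0)⁻¹ = 1 := by
        rw [← C_mul, mul_inv_cancel₀ (neg_ne_zero.mpr hb0), C_1]
      linear_combination (-v) * e1
  · have e1 : (C b1 : Rp) * C b1⁻¹ = 1 := by
      rw [← C_mul, mul_inv_cancel₀ hb1, C_1]
    refine ⟨C b1⁻¹ * u, ?_, ?_⟩
    · linear_combination (-u) * e1
    · rw [map_neg]
      linear_combination (C b1⁻¹ : Rp) * h + (-v) * e1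

end Stmt4Aux

open Stmt4Aux in
/-- a semistable `M` (rows and columns linearly independent over `ℂ`)
is not stable iff it is equivalent, modulo row and column operations, to a matrix
with a zero entry. -/
theorem stmt4 (M : Matrix (Fin 2) (Fin 2) Rp) (hM : ∀ i j, IsQuad (M i j))
    (hrows : LinearIndependent ℂ (fun i => M i))
    (hcols : LinearIndependent ℂ (fun j i => M i j)) :
    ¬ Stable M ↔
      ∃ (A B : Matrix.GeneralLinearGroup (Fin 2) ℂ) (i j : Fin 2),
        (((B : Matrix (Fin 2) (Fin 2) ℂ)).map (fun x => (C x : Rp)) * M *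
          ((A : Matrix (Fin 2) (Fin 2) ℂ)).map (fun x => (C x : Rp))) i j = 0 := by
  have hss : Semistable M := semistable_of M hrows hcols
  constructor
  · intro hns
    have hP : ¬ ∀ H K : Submodule ℂ (Fin 2 → ℂ), H ≠ ⊥ → MapsInto M H K →
        ¬(H = ⊤ ∧ K = ⊤) → Module.finrank ℂ H < Module.finrank ℂ K :=
      fun hP => hns ⟨hss, hP⟩
    push_neg at hP
    obtain ⟨H, K, hH, hmap, hnt, hge⟩ := hP
    have hHK := hss H K hH hmap
    obtain ⟨a, haH, ha0⟩ := Submodule.ne_bot_iff H |>.mp hH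
    have h1 : 1 ≤ Module.finrank ℂ H := by
      have hle : Submodule.span ℂ {a} ≤ H := by
        rw [Submodule.span_le]; simpa using haH
      calc 1 = Module.finrank ℂ (Submodule.span ℂ {a}) := (finrank_span_singleton ha0).symm
      _ ≤ Module.finrank ℂ H := Submodule.finrank_mono hle
    have h2 : Module.finrank ℂ H ≤ 2 := by
      have := Submodule.finrank_le H
      rwa [Module.finrank_fin_fun] at this
    have hK2 : Module.finrank ℂ K ≤ 2 := by
      have := Submodule.finrank_le K
      rwa [Module.finrank_fin_fun] at this
    by_cases hH2 : Module.finrank ℂ H = 2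
    · exfalso
      have hHt : H = ⊤ := by
        apply Submodule.eq_top_of_finrank_eq
        rw [hH2, Module.finrank_fin_fun]
      have hKt : K = ⊤ := by
        apply Submodule.eq_top_of_finrank_eq
        rw [Module.finrank_fin_fun]; omega
      exact hnt hHt hKt
    · have hK1 : Module.finrank ℂ K ≤ 1 := by omega
      obtain ⟨b, hb0, hborth⟩ := exists_orth K hK1
      have hz := kill b K hborth _ (hmap a haH)
      simp only [Matrix.mulVec, dotProduct, Fin.sum_univ_two] at hz
      refine ⟨Matrix.GeneralLinearGroup.mkOfDetNeZero (ext1 a) (ext1_det a ha0),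
        Matrix.GeneralLinearGroup.mkOfDetNeZero (ext1 b)ᵀ
          (by rw [Matrix.det_transpose]; exact ext1_det b hb0), 0, 0, ?_⟩
      show (((ext1 b)ᵀ).map (fun x => (C x : Rp)) * M *
        ((ext1 a)).map (fun x => (C x : Rp))) 0 0 = 0
      simp only [Matrix.mul_apply, Matrix.map_apply, Fin.sum_univ_two,
        Matrix.transpose_apply, ext1_col]
      linear_combination hz
  · rintro ⟨A, B, i, j, hz⟩ ⟨_, hst⟩
    set a : Fin 2 → ℂ := fun m => (A : Matrix (Fin 2) (Fin 2) ℂ) m j with ha_def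
    set b : Fin 2 → ℂ := fun l => (B : Matrix (Fin 2) (Fin 2) ℂ) i l with hb_def
    have ha0 : a ≠ 0 := col_ne_zero A j
    have hb0 : b ≠ 0 := row_ne_zero B i
    have hbne : ¬(b 0 = 0 ∧ b 1 = 0) := by
      rintro ⟨h0, h1⟩
      apply hb0; funext l; fin_cases l <;> simp [h0, h1]
    set v : Fin 2 → Rp := M.mulVec (fun m => (C (a m) : Rp)) with hv_def
    have hz0 : C (b 0) * v 0 + C (b 1) * v 1 = 0 := by
      simp only [Matrix.mul_apply, Matrix.map_apply, Fin.sum_univ_two] at hz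
      simp only [hv_def, Matrix.mulVec, dotProduct, Fin.sum_univ_two]
      linear_combination hz
    obtain ⟨p, hp0, hp1⟩ := factor (v 0) (v 1) (b 0) (b 1) hz0 hbne
    set k : Fin 2 → ℂ := ![b 1, -(b 0)] with hk_def
    have hk0 : k ≠ 0 := by
      intro h
      apply hbne
      have h0 := congrFun h 0
      have h1 := congrFun h 1
      simp [hk_def] at h0 h1
      exact ⟨h1, h0⟩
    have hvp : v = p • fun i' => (C (k i') : Rp) := by
      funext i'
      fin_cases i' <;> simp [hk_def, smul_eq_mul]
      · exact hp0
      · rw [hp1, map_neg]; ring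
    have hMI : MapsInto M (Submodule.span ℂ {a}) (Submodule.span ℂ {k}) := by
      intro h hh
      rw [Submodule.mem_span_singleton] at hh
      obtain ⟨c, rfl⟩ := hh
      have heq : (fun m => (C ((c • a) m) : Rp)) = (C c : Rp) • fun m => (C (a m) : Rp) := by
        funext m
        simp [smul_eq_mul, C_mul]
      rw [heq, Matrix.mulVec_smul, ← hv_def, hvp]
      exact Submodule.smul_mem _ _ (Submodule.smul_mem _ _ (Submodule.subset_span
        ⟨k, Submodule.mem_span_singleton_self k, rfl⟩))
    have hlt := hst (Submodule.span ℂ {a}) (Submodule.span ℂ {k})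
      (by rwa [Ne, Submodule.span_singleton_eq_bot]) hMI ?_
    · rw [finrank_span_singleton ha0, finrank_span_singleton hk0] at hlt
      omega
    · rintro ⟨hHt, _⟩
      have := finrank_span_singleton (K := ℂ) ha0
      rw [hHt, finrank_top, Module.finrank_fin_fun] at this
      omega
end
end

section
/- Let (X₁, X₂, Z) be a basis of R₁ and let φ ∈ 𝕎 be a matrix of the form [[X₁, Z, 0],[q₁₁, q₁₂, Z],[q₂₁, q₂₂, X₂]] with q₁₁, q₁₂, q₂₁, q₂₂ ∈ R₂. Then there exist (ν₁, ν₂) ∈ G, scalars a, b ∈ ℂ, and quadratic forms q′₁₂, q′₂₁ ∈ R₂, where q′₁₂ has zero coefficient of Z² when written in the monomial basis determined by (X₁, X₂, Z), such that ν₂ φ ν₁⁻¹ = [[X₁, Z, 0],[a·X₂², q′₁₂, Z],[q′₂₁, b·X₁², X₂]]. -/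
open MvPolynomial Matrix

noncomputable section

/-!
Write `q₁₁`, `q₁₂`, `q₂₂` in the monomial basis of `(X₁, X₂, Z)`. Taking `A`, `B`, `α`, `β` trivial,
`ν₂ φ ν₁⁻¹` adds `ψᵢ` times the first row to the lower rows and subtracts `φⱼ` times the last
column from the first two. In entry `(2,1)` the monomials divisible by `X₁` are absorbed by the row
operation and those divisible by `Z` by the column operation, leaving a multiple of `X₂²`; entry
`(3,2)` is treated symmetrically. The `Z²` term of `q₁₂` is removed by the `Z`-coefficient of `ψ₀`,
at the price of an `X₁Z` term in entry `(2,1)`, which the `X₁`-coefficient of `φ₀` cancels.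
-/

namespace MvPolynomial

variable {σ ι K : Type*} [Fintype σ] [Fintype ι] [Field K]

theorem span_range_eq_homogeneousSubmodule_one {v : ι → MvPolynomial σ K}
    (hv : ∀ i, (v i).IsHomogeneous 1) (hli : LinearIndependent K v)
    (hcard : Fintype.card σ ≤ Fintype.card ι) :
    Submodule.span K (Set.range v) = homogeneousSubmodule σ K 1 := by
  have : FiniteDimensional K (homogeneousSubmodule σ K 1) := by
    rw [homogeneousSubmodule_one_eq_span_X]
    exact FiniteDimensional.span_of_finite K (Set.finite_range _)
  refine Submodule.eq_of_le_of_finrank_le (Submodule.span_le.mpr ?_) ?_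
  · rintro _ ⟨i, rfl⟩
    exact hv i
  · rw [finrank_span_eq_card hli, homogeneousSubmodule_one_eq_span_X]
    exact (finrank_range_le_card _).trans hcard

theorem exists_sum_smul_mul_eq_of_isHomogeneous_two {v : ι → MvPolynomial σ K}
    (hv : ∀ i, (v i).IsHomogeneous 1) (hli : LinearIndependent K v)
    (hcard : Fintype.card σ ≤ Fintype.card ι) {q : MvPolynomial σ K}
    (hq : q.IsHomogeneous 2) :
    ∃ c : ι × ι → K, ∑ p, c p • (v p.1 * v p.2) = q := by
  rw [← Submodule.mem_span_range_iff_exists_fun, ← Set.image2_range, Set.image2_mul,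
    ← Submodule.span_mul_span, span_range_eq_homogeneousSubmodule_one hv hli hcard, ← pow_two,
    homogeneousSubmodule_one_pow]
  exact hq

end MvPolynomial

lemma isLin_C_mul (t : ℂ) {p : Rp} (h : IsLin p) : IsLin (C t * p) := by
  simpa [IsLin] using (isHomogeneous_C (Fin 3) t).mul h

lemma isQuad_mul {p q : Rp} (hp : IsLin p) (hq : IsLin q) : IsQuad (p * q) := by
  simpa [IsQuad, one_add_one_eq_two] using hp.mul hq

lemma exists_eq_quadratic_combination {x y z : Rp} (hx : IsLin x) (hy : IsLin y) (hz : IsLin z)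
    (hbasis : LinearIndependent ℂ ![x, y, z]) {q : Rp} (hq : IsQuad q) :
    ∃ c : Fin 6 → ℂ, q = C (c 0) * x ^ 2 + C (c 1) * (x * y) + C (c 2) * (x * z)
      + C (c 3) * y ^ 2 + C (c 4) * (y * z) + C (c 5) * z ^ 2 := by
  have hv : ∀ i, (![x, y, z] i).IsHomogeneous 1 := by
    intro i; fin_cases i <;> assumption
  obtain ⟨c, rfl⟩ := exists_sum_smul_mul_eq_of_isHomogeneous_two hv hbasis le_rfl hq
  refine ⟨![c (0, 0), c (0, 1) + c (1, 0), c (0, 2) + c (2, 0), c (1, 1),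
    c (1, 2) + c (2, 1), c (2, 2)], ?_⟩
  simp only [Fintype.sum_prod_type, Fin.sum_univ_three, smul_eq_C_mul, cons_val_zero,
    cons_val_one, cons_val, map_add]
  ring

lemma nu2_one_mul_mul_nu1_one_inv (ψ₀ ψ₁ φ₀ φ₁ a b d e f g h i : Rp) :
    nu2 1 1 ![ψ₀, ψ₁] * !![a, b, 0; d, e, f; g, h, i] * (nu1 1 1 ![φ₀, φ₁])⁻¹ =
      !![a, b, 0;
         d + ψ₀ * a - φ₀ * f, e + ψ₀ * b - φ₁ * f, f;
         g + ψ₁ * a - φ₀ * i, h + ψ₁ * b - φ₁ * i, i] := by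
  have hinv : (nu1 1 1 ![φ₀, φ₁])⁻¹ = nu1 1 1 ![-φ₀, -φ₁] := by
    refine Matrix.inv_eq_left_inv ?_
    ext j k
    fin_cases j <;> fin_cases k <;> simp [nu1, Matrix.mul_apply, Fin.sum_univ_three]
  rw [hinv]
  refine Matrix.ext fun j k => ?_
  fin_cases j <;> fin_cases k <;> simp [nu1, nu2, Matrix.mul_apply, Fin.sum_univ_three] <;> ring

/-- any `φ = [[X₁, Z, 0],[q₁₁, q₁₂, Z],[q₂₁, q₂₂, X₂]] ∈ 𝕎` is carried, by
some element of `G`, to a matrix `[[X₁, Z, 0],[a·X₂², q′₁₂, Z],[q′₂₁, b·X₁², X₂]]`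
where `q′₁₂` has no `Z²` term, i.e. `q′₁₂ ∈ span ℂ {X₁², X₁X₂, X₁Z, X₂², X₂Z}`. -/
theorem stmt7 (X₁ X₂ Z : Rp) (hX₁ : IsLin X₁) (hX₂ : IsLin X₂) (hZ : IsLin Z)
    (hbasis : LinearIndependent ℂ ![X₁, X₂, Z])
    (q₁₁ q₁₂ q₂₁ q₂₂ : Rp) (hq₁₁ : IsQuad q₁₁) (hq₁₂ : IsQuad q₁₂)
    (hq₂₁ : IsQuad q₂₁) (hq₂₂ : IsQuad q₂₂) :
    ∃ (A B : Matrix.GeneralLinearGroup (Fin 2) ℂ) (α β : ℂˣ) (φr ψc : Fin 2 → Rp),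
      (∀ i, IsLin (φr i)) ∧ (∀ i, IsLin (ψc i)) ∧
      ∃ (a b : ℂ) (q₁₂' q₂₁' : Rp),
        q₁₂' ∈ Submodule.span ℂ ({X₁^2, X₁*X₂, X₁*Z, X₂^2, X₂*Z} : Set Rp) ∧
        IsQuad q₂₁' ∧
        nu2 (B : Matrix (Fin 2) (Fin 2) ℂ) (β : ℂ) ψc *
            !![X₁, Z, 0; q₁₁, q₁₂, Z; q₂₁, q₂₂, X₂] *
            (nu1 (A : Matrix (Fin 2) (Fin 2) ℂ) (α : ℂ) φr)⁻¹ =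
          !![X₁, Z, 0; C a * X₂^2, q₁₂', Z; q₂₁', C b * X₁^2, X₂] := by
  obtain ⟨p, hp⟩ := exists_eq_quadratic_combination hX₁ hX₂ hZ hbasis hq₁₁
  obtain ⟨c, hc⟩ := exists_eq_quadratic_combination hX₁ hX₂ hZ hbasis hq₁₂
  obtain ⟨r, hr⟩ := exists_eq_quadratic_combination hX₁ hX₂ hZ hbasis hq₂₂
  set ψ₀ := C (-p 0) * X₁ + C (-p 1) * X₂ + C (-c 5) * Z
  set ψ₁ := C (-r 2) * X₁ + C (-r 4) * X₂ + C (-r 5) * Z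
  set φ₀ := C (p 2 - c 5) * X₁ + C (p 4) * X₂ + C (p 5) * Z
  set φ₁ := C (r 1) * X₁ + C (r 3) * X₂
  have hlin (a b c : ℂ) : IsLin (C a * X₁ + C b * X₂ + C c * Z) :=
    ((isLin_C_mul a hX₁).add (isLin_C_mul b hX₂)).add (isLin_C_mul c hZ)
  set q₁₂' := C (c 0) * X₁ ^ 2 + C (c 1) * (X₁ * X₂) + C (c 2 - p 0 - r 1) * (X₁ * Z)
    + C (c 3) * X₂ ^ 2 + C (c 4 - p 1 - r 3) * (X₂ * Z)
  have h₁₁ : q₁₁ + ψ₀ * X₁ - φ₀ * Z = C (p 3) * X₂ ^ 2 := by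
    simp only [hp, ψ₀, φ₀, map_neg, map_sub]; ring
  have h₁₂ : q₁₂ + ψ₀ * Z - φ₁ * Z = q₁₂' := by
    simp only [hc, ψ₀, φ₁, q₁₂', map_neg, map_sub]; ring
  have h₂₂ : q₂₂ + ψ₁ * Z - φ₁ * X₂ = C (r 0) * X₁ ^ 2 := by
    simp only [hr, ψ₁, φ₁, map_neg]; ring
  refine ⟨1, 1, 1, 1, ![φ₀, φ₁], ![ψ₀, ψ₁],
    Fin.forall_fin_two.mpr ⟨hlin _ _ _, (isLin_C_mul _ hX₁).add (isLin_C_mul _ hX₂)⟩,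
    Fin.forall_fin_two.mpr ⟨hlin _ _ _, hlin _ _ _⟩, p 3, r 0, q₁₂', q₂₁ + ψ₁ * X₁ - φ₀ * X₂, ?_,
    (hq₂₁.add (isQuad_mul (hlin _ _ _) hX₁)).sub (isQuad_mul (hlin _ _ _) hX₂), ?_⟩
  · simp only [q₁₂', ← smul_eq_C_mul]
    refine add_mem (add_mem (add_mem (add_mem ?_ ?_) ?_) ?_) ?_ <;>
      exact Submodule.smul_mem _ _ (Submodule.subset_span (by simp))
  · rw [GeneralLinearGroup.coe_one, Units.val_one, nu2_one_mul_mul_nu1_one_inv, h₁₁, h₁₂, h₂₂]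
end
end

section
/- Let (X₁, X₂, Z) be a basis of R₁, let a, b ∈ ℂ, let q₂₁ ∈ R₂ be any quadratic form, and let q₁₂ ∈ R₂ be a quadratic form whose coefficient of Z² (in the monomial basis determined by (X₁, X₂, Z)) is zero. Then the determinant of the 3×3 matrix [[X₁, Z, 0],[a·X₂², q₁₂, Z],[q₂₁, b·X₁², X₂]] is the zero polynomial if and only if a = 0, b = 0, q₁₂ = 0 and q₂₁ = 0 (equivalently, the morphism of sheaves on the projective plane represented by this matrix is non-injective precisely when the 2×2 submatrix [[a·X₂², q₁₂],[q₂₁, b·X₁²]] vanishes). -/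
/-!
After a linear change of coordinates we may take `(X₁, X₂, Z) = (x₀, x₁, x₂)`, and the
determinant becomes `x₀x₁q₁₂ - x₂(b x₀³ + a x₁³) + x₂² q₂₁` with `q₁₂` free of `x₂²`. Setting
`x₂ = 0` leaves `x₀x₁` times the `x₂`-free part of `q₁₂`; once that vanishes, dividing by `x₂` and
setting `x₂ = 0` again leaves `x₀x₁` times the rest of `q₁₂`, minus `b x₀³ + a x₁³`. Dehomogenizing
at `x₀ = 1` turns both binary forms into cubics in one variable, whose coefficients must all
vanish; what remains is `x₂² q₂₁ = 0`.
-/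

open MvPolynomial Matrix

noncomputable section

theorem Polynomial.cubic_coeffs_eq_zero {K : Type*} [Field K] {a b c d : K}
    (h : Polynomial.C a * Polynomial.X ^ 3 + Polynomial.C b * Polynomial.X ^ 2
      + Polynomial.C c * Polynomial.X + Polynomial.C d = 0) :
    a = 0 ∧ b = 0 ∧ c = 0 ∧ d = 0 :=
  Cubic.ext_iff.mp ((Cubic.toPoly_eq_zero_iff ⟨a, b, c, d⟩).mp h)

namespace MvPolynomial

variable {σ ι R K : Type*} [Fintype σ]

theorem exists_toMvPolynomial_eq_of_isHomogeneous_one [CommSemiring R]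
    {G : ι → MvPolynomial σ R} (hG : ∀ i, (G i).IsHomogeneous 1) :
    ∃ M : Matrix ι σ R, M.toMvPolynomial = G := by
  have hspan (i : ι) : ∃ c : σ → R, ∑ j, c j • X j = G i := by
    rw [← Submodule.mem_span_range_iff_exists_fun, ← homogeneousSubmodule_one_eq_span_X]
    exact hG i
  choose M hM using hspan
  refine ⟨M, ?_⟩
  ext1 i
  simp only [Matrix.toMvPolynomial, ← hM, ← C_mul_X_eq_monomial, smul_eq_C_mul]

theorem isUnit_of_linearIndependent_toMvPolynomial [Field K] [DecidableEq σ]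
    {M : Matrix σ σ K} (hM : LinearIndependent K M.toMvPolynomial) : IsUnit M := by
  rw [← Matrix.linearIndependent_rows_iff_isUnit]
  refine LinearIndependent.of_comp (Fintype.linearCombination K (X : σ → MvPolynomial σ K)) ?_
  convert hM
  ext1 i
  simp only [Function.comp_apply, Fintype.linearCombination_apply, Matrix.row_apply,
    Matrix.toMvPolynomial, smul_eq_C_mul, C_mul_X_eq_monomial]

theorem bind₁_toMvPolynomial_comp [CommSemiring R] (M N : Matrix σ σ R) :
    (bind₁ N.toMvPolynomial).comp (bind₁ M.toMvPolynomial) = bind₁ (M * N).toMvPolynomial := by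
  ext1 i
  simp only [AlgHom.comp_apply, bind₁_X_right, Matrix.toMvPolynomial_mul]

theorem exists_algEquiv_X_eq_of_linearIndependent [Field K] {G : σ → MvPolynomial σ K}
    (hG : ∀ i, (G i).IsHomogeneous 1) (hind : LinearIndependent K G) :
    ∃ φ : MvPolynomial σ K ≃ₐ[K] MvPolynomial σ K, ∀ i, φ (X i) = G i := by
  classical
  obtain ⟨M, rfl⟩ := exists_toMvPolynomial_eq_of_isHomogeneous_one hG
  have hM := (Matrix.isUnit_iff_isUnit_det M).mp (isUnit_of_linearIndependent_toMvPolynomial hind)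
  refine ⟨AlgEquiv.ofAlgHom (bind₁ M.toMvPolynomial) (bind₁ M⁻¹.toMvPolynomial) ?_ ?_,
    bind₁_X_right _⟩
  · rw [bind₁_toMvPolynomial_comp, M.nonsing_inv_mul hM, Matrix.toMvPolynomial_one, bind₁_X_left]
  · rw [bind₁_toMvPolynomial_comp, M.mul_nonsing_inv hM, Matrix.toMvPolynomial_one, bind₁_X_left]

theorem entries_eq_zero_of_det_eq_zero [Field K] {a b : K} {q r : MvPolynomial (Fin 3) K}
    (hq : q ∈ Submodule.span K
      ({X 0 ^ 2, X 0 * X 1, X 0 * X 2, X 1 ^ 2, X 1 * X 2} : Set (MvPolynomial (Fin 3) K)))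
    (hdet : (!![X 0, X 2, 0; C a * X 1 ^ 2, q, X 2; r, C b * X 0 ^ 2, X 1]).det = 0) :
    a = 0 ∧ b = 0 ∧ q = 0 ∧ r = 0 := by
  simp only [Submodule.mem_span_insert, Submodule.mem_span_singleton] at hq
  obtain ⟨c₀, _, ⟨c₁, _, ⟨c₂, _, ⟨c₃, _, ⟨c₄, rfl⟩, rfl⟩, rfl⟩, rfl⟩, rfl⟩ := hq
  simp only [det_fin_three, of_apply, cons_val', cons_val_zero, cons_val_one, cons_val_two,
    empty_val', cons_val_fin_one, tail_cons, vecHead, smul_eq_C_mul] at hdet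
  set B : MvPolynomial (Fin 3) K :=
    X 0 * X 1 * (C c₂ * X 0 + C c₄ * X 1) - C b * X 0 ^ 3 - C a * X 1 ^ 3 + X 2 * r
  have hAB : X 0 * X 1 * (C c₀ * X 0 ^ 2 + C c₁ * (X 0 * X 1) + C c₃ * X 1 ^ 2) + X 2 * B = 0 := by
    linear_combination hdet
  let ev : MvPolynomial (Fin 3) K →ₐ[K] Polynomial K := aeval ![1, Polynomial.X, 0]
  have hevA := congrArg ev hAB
  simp only [ev, map_add, map_mul, map_pow, map_zero, aeval_X, aeval_C, Polynomial.algebraMap_eq,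
    cons_val_zero, cons_val_one, cons_val_two, head_cons, tail_cons, one_pow, one_mul, mul_one,
    zero_mul, add_zero] at hevA
  obtain ⟨hc₃, hc₁, hc₀, -⟩ : c₃ = 0 ∧ c₁ = 0 ∧ c₀ = 0 ∧ (0 : K) = 0 :=
    Polynomial.cubic_coeffs_eq_zero (by rw [map_zero]; linear_combination hevA)
  subst hc₀ hc₁ hc₃
  simp only [map_zero, zero_mul, add_zero, mul_zero, zero_add, mul_eq_zero, X_ne_zero,
    false_or] at hAB
  have hevB := congrArg ev hAB
  simp only [ev, B, map_add, map_sub, map_mul, map_pow, map_zero, aeval_X, aeval_C,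
    Polynomial.algebraMap_eq, cons_val_zero, cons_val_one, cons_val_two, head_cons, tail_cons,
    one_pow, one_mul, mul_one, zero_mul, add_zero] at hevB
  obtain ⟨ha, hc₄, hc₂, hb⟩ : -a = 0 ∧ c₄ = 0 ∧ c₂ = 0 ∧ -b = 0 :=
    Polynomial.cubic_coeffs_eq_zero (by rw [map_neg, map_neg]; linear_combination hevB)
  rw [neg_eq_zero] at ha hb
  subst ha hb hc₂ hc₄
  simp only [B, map_zero, zero_mul, zero_add, mul_zero, sub_zero, mul_eq_zero, X_ne_zero,
    false_or] at hAB
  exact ⟨rfl, rfl, by simp, hAB⟩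

end MvPolynomial

theorem stmt8_general (X₁ X₂ Z : Rp) (hX₁ : IsLin X₁) (hX₂ : IsLin X₂) (hZ : IsLin Z)
    (hbasis : LinearIndependent ℂ ![X₁, X₂, Z]) (a b : ℂ)
    (q₁₂ q₂₁ : Rp)
    (hq₁₂ : q₁₂ ∈ Submodule.span ℂ ({X₁^2, X₁*X₂, X₁*Z, X₂^2, X₂*Z} : Set Rp)) :
    (!![X₁, Z, 0; C a * X₂^2, q₁₂, Z; q₂₁, C b * X₁^2, X₂]).det = 0 ↔
      (a = 0 ∧ b = 0 ∧ q₁₂ = 0 ∧ q₂₁ = 0) := by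
  refine ⟨fun hdet => ?_, ?_⟩
  · obtain ⟨φ, hφ⟩ := exists_algEquiv_X_eq_of_linearIndependent (G := ![X₁, X₂, Z])
      (fun i => by fin_cases i <;> assumption) hbasis
    have hX : φ (X 0) = X₁ ∧ φ (X 1) = X₂ ∧ φ (X 2) = Z := ⟨hφ 0, hφ 1, hφ 2⟩
    have hC (c : ℂ) : φ (C c) = C c := φ.commutes c
    obtain ⟨q, hq, rfl⟩ : ∃ q ∈ Submodule.span ℂ
        ({X 0 ^ 2, X 0 * X 1, X 0 * X 2, X 1 ^ 2, X 1 * X 2} : Set Rp), φ q = q₁₂ := by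
      refine (Submodule.mem_map (f := φ.toLinearMap)).mp ?_
      rw [Submodule.map_span]
      simpa [Set.image_insert_eq, hX] using hq₁₂
    obtain ⟨r, rfl⟩ := φ.surjective q₂₁
    have hdet' : (!![X 0, X 2, 0; C a * X 1 ^ 2, q, X 2; r, C b * X 0 ^ 2, X 1]).det = 0 := by
      apply φ.injective
      rw [AlgEquiv.map_det, map_zero]
      convert hdet using 2
      ext i j : 1
      fin_cases i <;> fin_cases j <;> simp [hX, hC]
    obtain ⟨rfl, rfl, rfl, rfl⟩ := entries_eq_zero_of_det_eq_zero hq hdet'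
    simp
  · rintro ⟨rfl, rfl, rfl, rfl⟩
    simp [det_fin_three]

/-- for a basis `(X₁, X₂, Z)` of the linear forms, `a, b ∈ ℂ`, `q₂₁` a
quadratic form, and `q₁₂` a quadratic form with no `Z²` term (i.e.
`q₁₂ ∈ span ℂ {X₁², X₁X₂, X₁Z, X₂², X₂Z}`), the determinant of
`[[X₁, Z, 0],[a·X₂², q₁₂, Z],[q₂₁, b·X₁², X₂]]` vanishes iff
`a = 0`, `b = 0`, `q₁₂ = 0` and `q₂₁ = 0`. -/
theorem stmt8 (X₁ X₂ Z : Rp) (hX₁ : IsLin X₁) (hX₂ : IsLin X₂) (hZ : IsLin Z)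
    (hbasis : LinearIndependent ℂ ![X₁, X₂, Z]) (a b : ℂ)
    (q₁₂ q₂₁ : Rp) (hq₂₁ : IsQuad q₂₁)
    (hq₁₂ : q₁₂ ∈ Submodule.span ℂ ({X₁^2, X₁*X₂, X₁*Z, X₂^2, X₂*Z} : Set Rp)) :
    (!![X₁, Z, 0; C a * X₂^2, q₁₂, Z; q₂₁, C b * X₁^2, X₂]).det = 0 ↔
      (a = 0 ∧ b = 0 ∧ q₁₂ = 0 ∧ q₂₁ = 0) :=
  stmt8_general X₁ X₂ Z hX₁ hX₂ hZ hbasis a b q₁₂ q₂₁ hq₁₂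
end
end

section
/- Let (X₁, X₂, Z) be a basis of R₁ and let φ ∈ 𝕎 be a matrix of the form [[X₁, Z, 0],[q₁₁, q₁₂, Z],[q₂₁, q₂₂, X₁]] with q₁₁, q₁₂, q₂₁, q₂₂ ∈ R₂. Then there exist (ν₁, ν₂) ∈ G, scalars a, b ∈ ℂ, and quadratic forms q′₁₂, q′₂₁ ∈ R₂, where q′₁₂ has zero coefficient of Z² when written in the monomial basis determined by (X₁, X₂, Z), such that ν₂ φ ν₁⁻¹ = [[X₁, Z, 0],[a·X₂², q′₁₂, Z],[q′₂₁, b·X₂², X₁]]. -/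
/-!
Take `A = B = 1` and `α = β = 1`: then `ν₂` adds `ψᵢ` times the first row to row `i + 1` and
`ν₁⁻¹` subtracts `φⱼ` times the last column from column `j`. Since `X₁, X₂, Z` span the linear
forms, every quadratic form is `a X₂² + X₁ l + Z m` with `l, m` linear, and suitable `ψ₁, φ₁`
(resp. `ψ₂, φ₂`) remove all but the `X₂²` term of `q₁₁` (resp. `q₂₂`). Replacing `(φ₂, ψ₂)` by
`(φ₂ + t Z, ψ₂ + t X₁)` does not change the new `q₂₂` but shifts the `Z²` coefficient of the new
`q₁₂` by `-t`, which kills it for the right `t`.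
-/

open MvPolynomial Matrix

noncomputable section

theorem span_range_eq_homogeneousSubmodule_one {K σ : Type*} [Field K] [Fintype σ]
    {v : σ → MvPolynomial σ K} (hv : LinearIndependent K v) (hdeg : ∀ i, (v i).IsHomogeneous 1) :
    Submodule.span K (Set.range v) = homogeneousSubmodule σ K 1 := by
  have hle : Submodule.span K (Set.range v) ≤ homogeneousSubmodule σ K 1 :=
    Submodule.span_le.2 (Set.range_subset_iff.2 hdeg)
  rw [homogeneousSubmodule_one_eq_span_X] at hle ⊢
  have : FiniteDimensional K (Submodule.span K (Set.range (X : σ → MvPolynomial σ K))) :=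
    FiniteDimensional.span_of_finite K (Set.finite_range _)
  refine Submodule.eq_of_le_of_finrank_le hle ?_
  rw [finrank_span_eq_card hv]
  exact finrank_range_le_card X

section

open Submodule

variable {K A : Type*} [CommRing K] [CommRing A] [Algebra K A] {x y z : A}

theorem exists_eq_smul_sq_add_mul_add_mul {q : A}
    (hq : q ∈ span K {x, y, z} * span K {x, y, z}) :
    ∃ a : K, ∃ l ∈ span K {x, y, z}, ∃ m ∈ span K {x, y, z}, q = a • y ^ 2 + x * l + z * m := by
  refine Submodule.mul_induction_on hq (fun u hu v hv => ?_) ?_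
  · obtain ⟨α, β, γ, rfl⟩ := mem_span_triple.1 hu
    obtain ⟨α', β', γ', hv'⟩ := mem_span_triple.1 hv
    have hy : y ∈ span K {x, y, z} := subset_span (by simp)
    refine ⟨β * β', α • v + (β * α') • y, add_mem (smul_mem _ _ hv) (smul_mem _ _ hy),
      γ • v + (β * γ') • y, add_mem (smul_mem _ _ hv) (smul_mem _ _ hy), ?_⟩
    subst hv'
    simp only [Algebra.smul_def, map_mul]
    ring
  · rintro q q' ⟨a, l, hl, m, hm, rfl⟩ ⟨a', l', hl', m', hm', rfl⟩
    exact ⟨a + a', l + l', add_mem hl hl', m + m', add_mem hm hm', by rw [add_smul]; ring⟩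

theorem span_mul_span_le_sup_span_sq (x y z : A) :
    span K {x, y, z} * span K {x, y, z} ≤
      span K {x ^ 2, x * y, x * z, y ^ 2, y * z} ⊔ K ∙ z ^ 2 := by
  rw [span_mul_span, span_le]
  rintro _ ⟨u, hu, v, hv, rfl⟩
  simp only [Set.mem_insert_iff, Set.mem_singleton_iff] at hu hv
  rcases hu with hu | hu | hu <;> rcases hv with hv | hv | hv <;> subst u v
  all_goals first
    | (apply mem_sup_right; rw [sq]; exact mem_span_singleton_self _)
    | (apply mem_sup_left; apply subset_span; simp [sq, mul_comm])

theorem exists_sub_smul_sq_mem_span {q : A} (hq : q ∈ span K {x, y, z} * span K {x, y, z}) :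
    ∃ e : K, q - e • z ^ 2 ∈ span K {x ^ 2, x * y, x * z, y ^ 2, y * z} := by
  obtain ⟨r, hr, s, hs, rfl⟩ := mem_sup.1 (span_mul_span_le_sup_span_sq x y z hq)
  obtain ⟨e, rfl⟩ := mem_span_singleton.1 hs
  exact ⟨e, by rwa [add_sub_cancel_right]⟩

theorem exists_normalizing_shears {q₁₁ q₁₂ q₂₂ : A}
    (h₁₁ : q₁₁ ∈ span K {x, y, z} * span K {x, y, z})
    (h₁₂ : q₁₂ ∈ span K {x, y, z} * span K {x, y, z})
    (h₂₂ : q₂₂ ∈ span K {x, y, z} * span K {x, y, z}) :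
    ∃ φ₁ ∈ span K {x, y, z}, ∃ φ₂ ∈ span K {x, y, z},
    ∃ ψ₁ ∈ span K {x, y, z}, ∃ ψ₂ ∈ span K {x, y, z}, ∃ a b : K,
      q₁₁ + ψ₁ * x - φ₁ * z = a • y ^ 2 ∧
      q₁₂ + (ψ₁ - φ₂) * z ∈ span K {x ^ 2, x * y, x * z, y ^ 2, y * z} ∧
      q₂₂ + ψ₂ * z - φ₂ * x = b • y ^ 2 := by
  have hx : x ∈ span K {x, y, z} := subset_span (by simp)
  have hz : z ∈ span K {x, y, z} := subset_span (by simp)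
  obtain ⟨a, l₁, hl₁, m₁, hm₁, rfl⟩ := exists_eq_smul_sq_add_mul_add_mul h₁₁
  obtain ⟨b, l₂, hl₂, m₂, hm₂, rfl⟩ := exists_eq_smul_sq_add_mul_add_mul h₂₂
  obtain ⟨e, he⟩ := exists_sub_smul_sq_mem_span h₁₂
  obtain ⟨s, hs⟩ := exists_sub_smul_sq_mem_span (mul_mem_mul (add_mem hl₁ hl₂) hz)
  refine ⟨m₁, hm₁, l₂ + (e - s) • z, add_mem hl₂ (smul_mem _ _ hz), -l₁, neg_mem hl₁,
    -m₂ + (e - s) • x, add_mem (neg_mem hm₂) (smul_mem _ _ hx), a, b, by ring, ?_, ?_⟩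
  · convert sub_mem he hs using 1
    simp only [Algebra.smul_def, map_sub]
    ring
  · simp only [Algebra.smul_def]
    ring

end

theorem nu1_one_inv (φ : Fin 2 → Rp) : (nu1 1 1 φ)⁻¹ = nu1 1 1 (-φ) := by
  refine Matrix.inv_eq_right_inv ?_
  refine Matrix.ext fun i j => ?_
  fin_cases i <;> fin_cases j <;> simp [nu1, Matrix.mul_apply, Fin.sum_univ_three]

theorem nu2_one_mul_mul_nu1_one_inv_s10 (x z q₁₁ q₁₂ q₂₁ q₂₂ φ₁ φ₂ ψ₁ ψ₂ : Rp) :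
    nu2 1 1 ![ψ₁, ψ₂] * !![x, z, 0; q₁₁, q₁₂, z; q₂₁, q₂₂, x] * (nu1 1 1 ![φ₁, φ₂])⁻¹ =
      !![x, z, 0; q₁₁ + ψ₁ * x - φ₁ * z, q₁₂ + (ψ₁ - φ₂) * z, z;
        q₂₁ + (ψ₂ - φ₁) * x, q₂₂ + ψ₂ * z - φ₂ * x, x] := by
  rw [nu1_one_inv]
  refine Matrix.ext fun i j => ?_
  fin_cases i <;> fin_cases j <;> simp [nu1, nu2, Matrix.mul_apply, Fin.sum_univ_three] <;> ring

/-- any `φ = [[X₁, Z, 0],[q₁₁, q₁₂, Z],[q₂₁, q₂₂, X₁]] ∈ 𝕎` is carried, by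
some element of `G`, to a matrix `[[X₁, Z, 0],[a·X₂², q′₁₂, Z],[q′₂₁, b·X₂², X₁]]`
where `q′₁₂` has no `Z²` term, i.e. `q′₁₂ ∈ span ℂ {X₁², X₁X₂, X₁Z, X₂², X₂Z}`. -/
theorem stmt10 (X₁ X₂ Z : Rp) (hX₁ : IsLin X₁) (hX₂ : IsLin X₂) (hZ : IsLin Z)
    (hbasis : LinearIndependent ℂ ![X₁, X₂, Z])
    (q₁₁ q₁₂ q₂₁ q₂₂ : Rp) (hq₁₁ : IsQuad q₁₁) (hq₁₂ : IsQuad q₁₂)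
    (hq₂₁ : IsQuad q₂₁) (hq₂₂ : IsQuad q₂₂) :
    ∃ (A B : Matrix.GeneralLinearGroup (Fin 2) ℂ) (α β : ℂˣ) (φr ψc : Fin 2 → Rp),
      (∀ i, IsLin (φr i)) ∧ (∀ i, IsLin (ψc i)) ∧
      ∃ (a b : ℂ) (q₁₂' q₂₁' : Rp),
        q₁₂' ∈ Submodule.span ℂ ({X₁^2, X₁*X₂, X₁*Z, X₂^2, X₂*Z} : Set Rp) ∧
        IsQuad q₂₁' ∧
        nu2 (B : Matrix (Fin 2) (Fin 2) ℂ) (β : ℂ) ψc *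
            !![X₁, Z, 0; q₁₁, q₁₂, Z; q₂₁, q₂₂, X₁] *
            (nu1 (A : Matrix (Fin 2) (Fin 2) ℂ) (α : ℂ) φr)⁻¹ =
          !![X₁, Z, 0; C a * X₂^2, q₁₂', Z; q₂₁', C b * X₂^2, X₁] := by
  have hspan : Submodule.span ℂ {X₁, X₂, Z} = homogeneousSubmodule (Fin 3) ℂ 1 := by
    rw [← span_range_eq_homogeneousSubmodule_one hbasis
        (Fin.forall_fin_succ.2 ⟨hX₁, Fin.forall_fin_two.2 ⟨hX₂, hZ⟩⟩),
      Matrix.range_cons, Matrix.range_cons_cons_empty, Set.singleton_union]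
  have hlin : ∀ l ∈ Submodule.span ℂ {X₁, X₂, Z}, IsLin l := fun l hl => by rwa [hspan] at hl
  have hquad : ∀ q, IsQuad q →
      q ∈ Submodule.span ℂ {X₁, X₂, Z} * Submodule.span ℂ {X₁, X₂, Z} := fun q hq => by
    rwa [← sq, hspan, homogeneousSubmodule_one_pow]
  obtain ⟨φ₁, hφ₁, φ₂, hφ₂, ψ₁, hψ₁, ψ₂, hψ₂, a, b, h₁₁, h₁₂, h₂₂⟩ :=
    exists_normalizing_shears (hquad _ hq₁₁) (hquad _ hq₁₂) (hquad _ hq₂₂)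
  refine ⟨1, 1, 1, 1, ![φ₁, φ₂], ![ψ₁, ψ₂], Fin.forall_fin_two.2 ⟨hlin _ hφ₁, hlin _ hφ₂⟩,
    Fin.forall_fin_two.2 ⟨hlin _ hψ₁, hlin _ hψ₂⟩, a, b, _, _, h₁₂,
    hq₂₁.add ((hlin _ (sub_mem hψ₂ hφ₁)).mul hX₁), ?_⟩
  simpa only [h₁₁, h₂₂, smul_eq_C_mul, Units.val_one] using
    nu2_one_mul_mul_nu1_one_inv_s10 X₁ Z q₁₁ q₁₂ q₂₁ q₂₂ φ₁ φ₂ ψ₁ ψ₂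
end
end
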